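/- Every positive integer solution of Cayley's equation with s = 2 arises from a Lucas-type sequence: if a, b, c are positive integers with C_2(a,b,c) = 0 and b ≥ max{a,c}, then there exist a positive integer p and non-negative integers n and m such that a = L_p(n), b = L_p(n+m), and c = L_p(m), where L_p : ℕ → ℤ is defined by L_p(0) = 2, L_p(1) = p, L_p(k+1) = p·L_p(k) − L_p(k−1). -/
import Mathlib


/-- Cayley's cubic form `C_s(x,y,z) = s(x²+y²+z²) − s³ − 2xyz`. -/
def cayley (s x y z : ℤ) : ℤ := s * (x ^ 2 + y ^ 2 + z ^ 2) - s ^ 3 - 2 * x * y * z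

/-- The Lucas-type sequence `L_p(0)=2`, `L_p(1)=p`, `L_p(k+2)=p·L_p(k+1)−L_p(k)`. -/
def lucasSeq (p : ℤ) : ℕ → ℤ
  | 0 => 2
  | 1 => p
  | k + 2 => p * lucasSeq p (k + 1) - lucasSeq p k

lemma lucas_rec (p : ℤ) (k : ℕ) :
    lucasSeq p (k + 2) = p * lucasSeq p (k + 1) - lucasSeq p k := rfl

lemma lucas_mul (p : ℤ) (y : ℕ) : ∀ x : ℕ,
    lucasSeq p (x + y) * lucasSeq p y = lucasSeq p (x + 2 * y) + lucasSeq p x := by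
  induction y using Nat.twoStepInduction with
  | zero => intro x; simp [lucasSeq]; ring
  | one =>
      intro x
      have h1 : lucasSeq p 1 = p := rfl
      rw [h1, show x + 2 * 1 = x + 2 from by omega]
      rw [lucas_rec]
      ring
  | more n ih1 ih2 =>
      intro x
      have e1 : lucasSeq p (x + n + 2) * lucasSeq p (n + 1)
          = lucasSeq p (x + 2 * n + 3) + lucasSeq p (x + 1) := by
        have h := ih2 (x + 1)
        rw [show x + 1 + (n + 1) = x + n + 2 from by omega,
            show x + 1 + 2 * (n + 1) = x + 2 * n + 3 from by omega] at h
        exact h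
      have e2 : lucasSeq p (x + n + 2) * lucasSeq p n
          = lucasSeq p (x + 2 * n + 2) + lucasSeq p (x + 2) := by
        have h := ih1 (x + 2)
        rw [show x + 2 + n = x + n + 2 from by omega,
            show x + 2 + 2 * n = x + 2 * n + 2 from by omega] at h
        exact h
      have r1 : lucasSeq p (n + 2) = p * lucasSeq p (n + 1) - lucasSeq p n := rfl
      have r2 : lucasSeq p (x + 2 * n + 4)
          = p * lucasSeq p (x + 2 * n + 3) - lucasSeq p (x + 2 * n + 2) := by
        rw [show x + 2 * n + 4 = (x + 2 * n + 2) + 2 from by omega,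
            show x + 2 * n + 3 = (x + 2 * n + 2) + 1 from by omega]
        rfl
      have r3 : lucasSeq p (x + 2) = p * lucasSeq p (x + 1) - lucasSeq p x := rfl
      rw [show x + (n + 2) = x + n + 2 from by omega,
          show x + 2 * (n + 2) = x + 2 * n + 4 from by omega]
      linear_combination lucasSeq p (x + n + 2) * r1 + p * e1 - e2 - r2 - r3

lemma lucas_aux : ∀ N : ℕ, ∀ a b c : ℤ, b.toNat ≤ N → 0 < a → 0 < b → 0 < c →
    a ^ 2 + b ^ 2 + c ^ 2 - a * b * c = 4 → a ≤ b → c ≤ b →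
    ∃ p : ℤ, 0 < p ∧ ∃ n m : ℕ,
      a = lucasSeq p n ∧ b = lucasSeq p (n + m) ∧ c = lucasSeq p m := by
  intro N
  induction N with
  | zero => intro a b c hN ha hb hc _ _ _; omega
  | succ N ih =>
      intro a b c hN ha hb hc hm hab hcb
      by_cases ha1 : a = 1
      · subst ha1
        have hm1 : b ^ 2 + c ^ 2 - b * c = 3 := by linear_combination hm
        have hb2 : b ≤ 2 := by nlinarith [sq_nonneg (2 * c - b)]
        interval_cases b <;> interval_cases c <;> first
          | omega
          | exact ⟨1, one_pos, 1, 5, by decide, by decide, by decide⟩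
      by_cases hc1 : c = 1
      · subst hc1
        have hm1 : a ^ 2 + b ^ 2 - a * b = 3 := by linear_combination hm
        have hb2 : b ≤ 2 := by nlinarith [sq_nonneg (2 * a - b)]
        interval_cases b <;> interval_cases a <;> first
          | omega
          | exact ⟨1, one_pos, 5, 1, by decide, by decide, by decide⟩
      by_cases ha2 : a = 2
      · subst ha2
        have hbc : b = c := by nlinarith [sq_nonneg (b - c)]
        exact ⟨c, hc, 0, 1, by simp [lucasSeq], by simpa [lucasSeq] using hbc, by simp [lucasSeq]⟩
      by_cases hc2 : c = 2
      · subst hc2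
        have hba : b = a := by nlinarith [sq_nonneg (b - a)]
        exact ⟨a, ha, 1, 0, by simp [lucasSeq], by simpa [lucasSeq] using hba,
          by simp [lucasSeq]⟩
      have ha3 : 3 ≤ a := by omega
      have hc3 : 3 ≤ c := by omega
      have hb'pos : 0 < a * c - b := by nlinarith
      have hm' : c ^ 2 + a ^ 2 + (a * c - b) ^ 2 - c * a * (a * c - b) = 4 := by
        linear_combination hm
      by_cases hca : c ≤ a
      · -- middle element of the new triple is a
        have hneg : (b - a) * ((a * c - b) - a) < 0 := by nlinarith
        have hb'a : a * c - b < a := by nlinarith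
        have hba : a < b := by nlinarith
        obtain ⟨p, hp, n', m, h1, h2, h3⟩ :=
          ih c a (a * c - b) (by omega) hc ha hb'pos hm' hca (le_of_lt hb'a)
        refine ⟨p, hp, n' + m, n', h2, ?_, h1⟩
        rw [show n' + m = m + n' from by omega] at h2
        rw [show (n' + m) + n' = m + 2 * n' from by omega]
        have key := lucas_mul p n' m
        rw [← h2, ← h1] at key
        linarith
      · -- middle element of the new triple is c
        push_neg at hca
        have hneg : (b - c) * ((a * c - b) - c) < 0 := by nlinarith
        have hb'c : a * c - b < c := by nlinarith
        have hbc : c < b := by nlinarith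
        obtain ⟨p, hp, n', m, h1, h2, h3⟩ :=
          ih a c (a * c - b) (by omega) ha hc hb'pos
            (by linear_combination hm') (le_of_lt hca) (le_of_lt hb'c)
        refine ⟨p, hp, n', n' + m, h1, ?_, h2⟩
        rw [show n' + m = m + n' from by omega] at h2
        rw [show n' + (n' + m) = m + 2 * n' from by omega]
        have key := lucas_mul p n' m
        rw [← h2, ← h1] at key
        linarith

theorem stmt_19 (a b c : ℤ) (ha : 0 < a) (hb : 0 < b) (hc : 0 < c)
    (heq : cayley 2 a b c = 0) (hbmax : max a c ≤ b) :
    ∃ p : ℤ, 0 < p ∧ ∃ n m : ℕ,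
      a = lucasSeq p n ∧ b = lucasSeq p (n + m) ∧ c = lucasSeq p m := by
  unfold cayley at heq
  have hm : a ^ 2 + b ^ 2 + c ^ 2 - a * b * c = 4 := by linarith
  exact lucas_aux b.toNat a b c le_rfl ha hb hc hm
    (le_trans (le_max_left a c) hbmax) (le_trans (le_max_right a c) hbmax)
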